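/- arXiv:2410.05704 — 2 statements merged into one kernel-verified Lean document; each statement's English description precedes it below -/
import Mathlib

section
/- Let κ(x) = ax² + bx + c be a polynomial with integer coefficients and a ≠ 0, with discriminant Δ_κ = b² − 4ac. Then for every odd prime p and every integer α ≥ 1, the number of residue classes u ∈ ℤ/p^αℤ with κ(u) ≡ 0 (mod p^α) is at most (α + 1) · max( gcd(a, p^α), [gcd(a, p^α) divides Δ_κ] · gcd(Δ_κ/gcd(a, p^α), p^α) ), where [P] equals 1 if the condition P holds and 0 otherwise, and gcd(m, p^α) means gcd(|m|, p^α) with the convention gcd(0, p^α) = p^α. -/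
open Finset
open scoped BigOperators

private lemma aux_int_decomp {p : ℕ} (hp : p.Prime) {z : ℤ} (hz : z ≠ 0) :
    ∃ t x, ¬ (p:ℤ) ∣ x ∧ z = (p:ℤ)^t * x := by
  obtain ⟨t, n', hnd, hn⟩ :=
    Nat.exists_eq_pow_mul_and_not_dvd (Int.natAbs_ne_zero.mpr hz) p hp.ne_one
  rcases Int.natAbs_eq z with h | h
  · refine ⟨t, (n' : ℤ), ?_, ?_⟩
    · exact fun hd => hnd (Int.natCast_dvd_natCast.mp hd)
    · rw [h, hn]; push_cast; ring
  · refine ⟨t, -(n' : ℤ), ?_, ?_⟩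
    · rw [dvd_neg]; exact fun hd => hnd (Int.natCast_dvd_natCast.mp hd)
    · rw [h, hn]; push_cast; ring

private lemma aux_card {q s : ℕ} (T : Finset ℕ) (hT : T ⊆ Finset.range (q*s))
    (h : ∀ t ∈ T, ∀ t' ∈ T, t % q = t' % q) : T.card ≤ s := by
  rcases Nat.eq_zero_or_pos q with hq | hq
  · subst hq
    have : T = ∅ := Finset.subset_empty.mp (by simpa using hT)
    simp [this]
  · have hle : T.card ≤ (Finset.range s).card := by
      apply Finset.card_le_card_of_injOn (fun t => t / q)
      · intro t ht
        rw [Finset.mem_coe, Finset.mem_range]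
        exact Nat.div_lt_of_lt_mul (Finset.mem_range.mp (hT ht))
      · intro t ht t' ht' hdd
        simp only at hdd
        have h1 := Nat.div_add_mod t q
        have h2 := Nat.div_add_mod t' q
        have h3 := h t ht t' ht'
        rw [hdd, h3] at h1
        omega
    simpa using hle

theorem stmt7 :
    ∀ (a b c : ℤ), a ≠ 0 →
    ∀ p : ℕ, p.Prime → p ≠ 2 →
    ∀ α : ℕ, 1 ≤ α →
      ((Finset.range (p ^ α)).filter
          (fun u : ℕ => (p ^ α : ℤ) ∣ (a * (u : ℤ) ^ 2 + b * (u : ℤ) + c))).card ≤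
        (α + 1) *
          max (Int.gcd a (p ^ α))
            (if (Int.gcd a (p ^ α) : ℤ) ∣ (b ^ 2 - 4 * a * c) then
              Int.gcd ((b ^ 2 - 4 * a * c) / (Int.gcd a (p ^ α) : ℤ)) (p ^ α)
            else 0) := by
  intro a b c ha p hp hp2 α hα
  have hp' : Prime (p:ℤ) := Nat.prime_iff_prime_int.mp hp
  have hp0 : (p:ℤ) ≠ 0 := hp'.ne_zero
  have hp1 : 1 < p := hp.one_lt
  set Δ : ℤ := b ^ 2 - 4 * a * c with hΔdef
  set g : ℕ := Int.gcd a (p ^ α) with hgdef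
  set R : Finset ℕ := (Finset.range (p ^ α)).filter
      (fun u : ℕ => (p ^ α : ℤ) ∣ (a * (u : ℤ) ^ 2 + b * (u : ℤ) + c)) with hRdef
  set M : ℕ := max g
      (if (g : ℤ) ∣ Δ then Int.gcd (Δ / (g : ℤ)) (p ^ α) else 0) with hMdef
  -- trivial bound
  have hNtriv : R.card ≤ p ^ α := by
    calc R.card ≤ (Finset.range (p^α)).card := Finset.card_filter_le _ _
    _ = p ^ α := Finset.card_range _
  -- g = p ^ β
  have hgd : g ∣ p ^ α := by
    have := Int.gcd_dvd_right (a := a) (b := ((p:ℤ) ^ α))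
    rw [hgdef]
    exact Int.natCast_dvd_natCast.mp (by push_cast at this ⊢; exact this)
  obtain ⟨β, hβα, hgβ⟩ := (Nat.dvd_prime_pow hp).mp hgd
  have hgZ : (g : ℤ) = (p:ℤ) ^ β := by rw [hgβ]; push_cast; ring
  -- key2: a power of p dividing Δ/g gives a lower bound on M
  have key2 : ∀ e : ℕ, (g : ℤ) ∣ Δ → (p:ℤ) ^ e ∣ (Δ / (g : ℤ)) → e ≤ α → p ^ e ≤ M := by
    intro e hgΔ hdvd he
    have h1 : ((p ^ e : ℕ) : ℤ) ∣ (Int.gcd (Δ / (g : ℤ)) ((p:ℤ) ^ α) : ℤ) := by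
      apply Int.dvd_coe_gcd
      · push_cast; exact hdvd
      · push_cast; exact pow_dvd_pow _ he
    have h2 : p ^ e ∣ Int.gcd (Δ / (g : ℤ)) ((p:ℤ) ^ α) := Int.natCast_dvd_natCast.mp h1
    have h3 : 0 < Int.gcd (Δ / (g : ℤ)) ((p:ℤ) ^ α) := by
      rw [Int.gcd_pos_iff]
      right
      exact pow_ne_zero _ hp0
    calc p ^ e ≤ Int.gcd (Δ / (g : ℤ)) ((p:ℤ) ^ α) := Nat.le_of_dvd h3 h2
    _ ≤ M := by rw [hMdef, if_pos hgΔ]; exact le_max_right _ _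
  -- cancellation helper
  have hcancel : ∀ (s j : ℕ) (y : ℤ), (p:ℤ) ^ (s + j) ∣ (p:ℤ) ^ s * y → (p:ℤ) ^ j ∣ y := by
    intro s j y h
    rw [pow_add] at h
    exact (mul_dvd_mul_iff_left (pow_ne_zero s hp0)).mp h
  by_cases hβeq : β = α
  · -- p^α ∣ a : trivial case, M ≥ p^α
    have : p ^ α ≤ M := by
      calc p ^ α = g := by rw [hgβ, hβeq]
      _ ≤ M := le_max_left _ _
    calc R.card ≤ p ^ α := hNtriv
    _ ≤ M := this
    _ ≤ (α + 1) * M := Nat.le_mul_of_pos_left _ (by omega)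
  have hβlt : β < α := lt_of_le_of_ne hβα hβeq
  by_cases hbig : (p:ℤ) ^ (α + β) ∣ Δ
  · -- Case A : M ≥ p^α
    obtain ⟨k, hk⟩ := hbig
    have hgΔ : (g:ℤ) ∣ Δ := by
      rw [hgZ, hk]
      exact Dvd.dvd.mul_right (pow_dvd_pow _ (by omega)) _
    have hΔg : Δ / (g:ℤ) = (p:ℤ) ^ α * k := by
      rw [hgZ]
      have : Δ = (p:ℤ) ^ β * ((p:ℤ) ^ α * k) := by rw [hk, pow_add]; ring
      rw [this, Int.mul_ediv_cancel_left _ (pow_ne_zero _ hp0)]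
    have hM : p ^ α ≤ M := key2 α hgΔ (by rw [hΔg]; exact Dvd.intro _ rfl) le_rfl
    calc R.card ≤ p ^ α := hNtriv
    _ ≤ M := hM
    _ ≤ (α + 1) * M := Nat.le_mul_of_pos_left _ (by omega)
  -- Case B
  have hΔ0 : Δ ≠ 0 := fun h => hbig (h ▸ dvd_zero _)
  obtain ⟨δ, D, hD, hΔ⟩ := aux_int_decomp hp hΔ0
  have hδm : δ < α + β := by
    by_contra hc
    exact hbig (hΔ ▸ Dvd.dvd.mul_right (pow_dvd_pow _ (by omega)) _)
  have hDnd : ∀ j : ℕ, δ < j → ¬ (p:ℤ) ^ j ∣ Δ := by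
    intro j hj hdvd
    have : (p:ℤ) ^ (δ + 1) ∣ Δ := dvd_trans (pow_dvd_pow _ (by omega)) hdvd
    rw [hΔ, pow_succ] at this
    exact hD ((mul_dvd_mul_iff_left (pow_ne_zero δ hp0)).mp this)
  -- a = p^β * a₁ with p ∤ a₁
  have hpa : (p:ℤ) ^ β ∣ a := hgZ ▸ Int.gcd_dvd_left _ _
  obtain ⟨a₁, ha₁⟩ := hpa
  have hpa₁ : ¬ (p:ℤ) ∣ a₁ := by
    intro hdd
    have h1 : ((p ^ (β+1) : ℕ) : ℤ) ∣ Int.gcd a ((p:ℤ) ^ α) := by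
      apply Int.dvd_coe_gcd
      · push_cast
        rw [ha₁, pow_succ]
        exact mul_dvd_mul_left _ hdd
      · push_cast
        exact pow_dvd_pow _ (by omega)
    have h2 : p ^ (β+1) ∣ g := Int.natCast_dvd_natCast.mp h1
    rw [hgβ] at h2
    have := (Nat.pow_dvd_pow_iff_le_right hp1).mp h2
    omega
  have h2a₁ : ¬ (p:ℤ) ∣ 2 * a₁ := by
    intro hdd
    rcases hp'.dvd_mul.mp hdd with h | h
    · have : p ∣ 2 := Int.natCast_dvd_natCast.mp (by exact_mod_cast h)
      have := (Nat.prime_dvd_prime_iff_eq hp Nat.prime_two).mp this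
      exact hp2 this
    · exact hpa₁ h
  set m : ℕ := α + β with hmdef
  -- every root gives w with w² ≡ Δ mod p^m
  have hroot : ∀ u : ℕ, u ∈ R → (p:ℤ) ^ m ∣ (2*a*(u:ℤ)+b)^2 - Δ := by
    intro u hu
    have hk : (p:ℤ) ^ α ∣ (a * (u:ℤ) ^ 2 + b * (u:ℤ) + c) := by
      have := (Finset.mem_filter.mp hu).2
      push_cast at this ⊢
      exact this
    obtain ⟨k, hk⟩ := hk
    have : (2*a*(u:ℤ)+b)^2 - Δ = (p:ℤ)^m * (4*a₁*k) := by
      rw [hΔdef]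
      have h4 : (2*a*(u:ℤ)+b)^2 - (b ^ 2 - 4 * a * c) = 4*a*(a * (u:ℤ) ^ 2 + b * (u:ℤ) + c) := by ring
      rw [h4, hk, ha₁, hmdef, pow_add]
      ring
    rw [this]
    exact Dvd.intro _ rfl
  -- valuation of solutions w
  have hval : ∀ w : ℤ, (p:ℤ) ^ m ∣ w^2 - Δ → ∃ t x, ¬ (p:ℤ) ∣ x ∧ w = (p:ℤ)^t * x ∧ 2*t = δ := by
    intro w hw
    have hw0 : w ≠ 0 := by
      intro h
      subst h
      apply hDnd m hδm
      have h0 : (0:ℤ)^2 - Δ = -Δ := by ring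
      rw [h0] at hw
      exact dvd_neg.mp hw
    obtain ⟨t, x, hx, hwtx⟩ := aux_int_decomp hp hw0
    refine ⟨t, x, hx, hwtx, ?_⟩
    by_contra hne
    rcases Nat.lt_or_ge (2*t) δ with hlt | hge
    · -- p^(2t+1) ∣ Δ and ∣ w²-Δ hence ∣ w² : contradiction
      have h1 : (p:ℤ) ^ (2*t+1) ∣ Δ := hΔ ▸ Dvd.dvd.mul_right (pow_dvd_pow _ (by omega)) _
      have h2 : (p:ℤ) ^ (2*t+1) ∣ w^2 - Δ := dvd_trans (pow_dvd_pow _ (by omega)) hw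
      have h3 : (p:ℤ) ^ (2*t+1) ∣ w^2 := by
        have := dvd_add h2 h1
        simpa using this
      have h4 : w^2 = (p:ℤ)^(2*t) * x^2 := by rw [hwtx, two_mul, pow_add]; ring
      rw [h4] at h3
      have := hcancel (2*t) 1 (x^2) (by rw [Nat.add_comm] at h3 ⊢; exact h3)
      simp at this
      exact hx (hp'.dvd_of_dvd_pow this)
    · have hgt : δ < 2*t := by omega
      have h2 : (p:ℤ) ^ (δ+1) ∣ w^2 - Δ := dvd_trans (pow_dvd_pow _ (by omega)) hw
      have h3 : (p:ℤ) ^ (δ+1) ∣ w^2 := by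
        have h4 : w^2 = (p:ℤ)^(2*t) * x^2 := by rw [hwtx, two_mul, pow_add]; ring
        rw [h4]
        exact Dvd.dvd.mul_right (pow_dvd_pow _ (by omega)) _
      have h5 : (p:ℤ) ^ (δ+1) ∣ Δ := by
        have := dvd_sub h3 h2
        simpa using this
      exact hDnd (δ+1) (by omega) h5
  -- main count
  rcases R.eq_empty_or_nonempty with hRe | ⟨u₀, hu₀⟩
  · rw [hRe]; simp
  obtain ⟨e, x₀, hx₀, hw₀, he2⟩ := hval _ (hroot u₀ hu₀)
  set w₀ : ℤ := 2*a*(u₀:ℤ)+b with hw₀def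
  have heα : e < α := by omega
  have hem : 2*e < m := by omega
  -- disjunction for every root
  have hdisj : ∀ u ∈ R, (p:ℤ)^(m-e) ∣ (2*a*(u:ℤ)+b) - w₀ ∨ (p:ℤ)^(m-e) ∣ (2*a*(u:ℤ)+b) + w₀ := by
    intro u hu
    obtain ⟨t, x, hx, hwtx, ht2⟩ := hval _ (hroot u hu)
    have hte : t = e := by omega
    rw [hte] at hwtx
    have hdd : (p:ℤ)^m ∣ ((2*a*(u:ℤ)+b)^2 - Δ) - (w₀^2 - Δ) := dvd_sub (hroot u hu) (hroot u₀ hu₀)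
    have heq : ((2*a*(u:ℤ)+b)^2 - Δ) - (w₀^2 - Δ) = (p:ℤ)^(2*e) * ((x - x₀) * (x + x₀)) := by
      rw [hwtx, hw₀, two_mul, pow_add]
      ring
    rw [heq] at hdd
    have hdd2 : (p:ℤ)^(m - 2*e) ∣ (x - x₀) * (x + x₀) := by
      apply hcancel (2*e) (m - 2*e)
      rwa [Nat.add_sub_cancel' (le_of_lt hem)]
    have hme : e + (m - 2*e) = m - e := by omega
    by_cases hc : (p:ℤ) ∣ (x - x₀)
    · left
      have hnc : ¬ (p:ℤ) ∣ (x + x₀) := by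
        intro hcc
        have : (p:ℤ) ∣ 2 * x := by
          have := dvd_add hc hcc
          have h7 : (x - x₀) + (x + x₀) = 2 * x := by ring
          rwa [h7] at this
        rcases hp'.dvd_mul.mp this with h | h
        · have : p ∣ 2 := Int.natCast_dvd_natCast.mp (by exact_mod_cast h)
          exact hp2 ((Nat.prime_dvd_prime_iff_eq hp Nat.prime_two).mp this)
        · exact hx h
      have hcop : IsCoprime ((p:ℤ)^(m-2*e)) (x + x₀) :=
        (hp'.coprime_iff_not_dvd.mpr hnc).pow_left
      have h8 : (p:ℤ)^(m-2*e) ∣ (x - x₀) := by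
        rw [mul_comm (x - x₀) (x + x₀)] at hdd2
        exact hcop.dvd_of_dvd_mul_left hdd2
      have h9 : (2*a*(u:ℤ)+b) - w₀ = (p:ℤ)^e * (x - x₀) := by rw [hwtx, hw₀]; ring
      rw [h9, ← hme, pow_add]
      exact mul_dvd_mul_left _ h8
    · right
      have hcop : IsCoprime ((p:ℤ)^(m-2*e)) (x - x₀) :=
        (hp'.coprime_iff_not_dvd.mpr hc).pow_left
      have h8 : (p:ℤ)^(m-2*e) ∣ (x + x₀) := hcop.dvd_of_dvd_mul_left hdd2
      have h9 : (2*a*(u:ℤ)+b) + w₀ = (p:ℤ)^e * (x + x₀) := by rw [hwtx, hw₀]; ring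
      rw [h9, ← hme, pow_add]
      exact mul_dvd_mul_left _ h8
  -- two residue classes
  set A : Finset ℕ := R.filter (fun u => (p:ℤ)^(m-e) ∣ (2*a*(u:ℤ)+b) - w₀) with hAdef
  set B : Finset ℕ := R.filter (fun u => (p:ℤ)^(m-e) ∣ (2*a*(u:ℤ)+b) + w₀) with hBdef
  have hsub : R ⊆ A ∪ B := by
    intro u hu
    rcases hdisj u hu with h | h
    · exact Finset.mem_union_left _ (Finset.mem_filter.mpr ⟨hu, h⟩)
    · exact Finset.mem_union_right _ (Finset.mem_filter.mpr ⟨hu, h⟩)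
  -- congruence within each class
  have hcong : ∀ (T : Finset ℕ) (v : ℤ), (∀ u ∈ T, (p:ℤ)^(m-e) ∣ (2*a*(u:ℤ)+b) - v) →
      T ⊆ Finset.range (p ^ α) → T.card ≤ p ^ e := by
    intro T v hTd hTr
    have hqs : p ^ (α - e) * p ^ e = p ^ α := by
      rw [← pow_add]
      congr 1
      omega
    apply aux_card T (by rw [hqs]; exact hTr)
    intro t ht t' ht'
    have hd1 := hTd t ht
    have hd2 := hTd t' ht'
    have hd3 : (p:ℤ)^(m-e) ∣ 2*a*((t:ℤ) - (t':ℤ)) := by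
      have := dvd_sub hd1 hd2
      have h7 : ((2*a*(t:ℤ)+b) - v) - ((2*a*(t':ℤ)+b) - v) = 2*a*((t:ℤ) - (t':ℤ)) := by ring
      rwa [h7] at this
    have hd4 : (p:ℤ)^(α-e) ∣ (2*a₁) * ((t:ℤ) - (t':ℤ)) := by
      apply hcancel β (α - e)
      have h7 : β + (α - e) = m - e := by omega
      rw [h7]
      have h8 : 2*a*((t:ℤ) - (t':ℤ)) = (p:ℤ)^β * ((2*a₁) * ((t:ℤ) - (t':ℤ))) := by
        rw [ha₁]; ring
      rwa [h8] at hd3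
    have hcop : IsCoprime ((p:ℤ)^(α-e)) (2*a₁) :=
      (hp'.coprime_iff_not_dvd.mpr h2a₁).pow_left
    have hd5 : (p:ℤ)^(α-e) ∣ ((t:ℤ) - (t':ℤ)) := hcop.dvd_of_dvd_mul_left hd4
    -- convert to nat mod
    have hd6 : (t:ℤ) % ((p:ℤ)^(α-e)) = (t':ℤ) % ((p:ℤ)^(α-e)) := Int.ModEq.symm (Int.modEq_iff_dvd.mpr hd5)
    have : ((t % p^(α-e) : ℕ) : ℤ) = ((t' % p^(α-e) : ℕ) : ℤ) := by
      push_cast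
      exact hd6
    exact_mod_cast this
  have hA : A.card ≤ p ^ e := by
    apply hcong A w₀
    · intro u hu; exact (Finset.mem_filter.mp hu).2
    · intro u hu; exact Finset.mem_of_mem_filter _ ((Finset.mem_filter.mp hu).1 : u ∈ R)
  have hB : B.card ≤ p ^ e := by
    apply hcong B (-w₀)
    · intro u hu
      have := (Finset.mem_filter.mp hu).2
      simpa [sub_neg_eq_add] using this
    · intro u hu; exact Finset.mem_of_mem_filter _ ((Finset.mem_filter.mp hu).1 : u ∈ R)
  have hN2 : R.card ≤ 2 * p ^ e := by
    calc R.card ≤ (A ∪ B).card := Finset.card_le_card hsub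
    _ ≤ A.card + B.card := Finset.card_union_le _ _
    _ ≤ 2 * p ^ e := by omega
  -- p^e ≤ M
  have hpeM : p ^ e ≤ M := by
    rcases le_or_gt e β with he | he
    · calc p ^ e ≤ p ^ β := Nat.pow_le_pow_right hp.pos he
      _ = g := hgβ.symm
      _ ≤ M := le_max_left _ _
    · have hgΔ : (g:ℤ) ∣ Δ := by
        rw [hgZ, hΔ]
        exact Dvd.dvd.mul_right (pow_dvd_pow _ (by omega)) _
      apply key2 e hgΔ _ (le_of_lt heα)
      have hΔg : Δ / (g:ℤ) = (p:ℤ)^(δ - β) * D := by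
        rw [hgZ]
        have h7 : Δ = (p:ℤ)^β * ((p:ℤ)^(δ-β) * D) := by
          rw [hΔ, ← mul_assoc, ← pow_add]
          congr 2
          omega
        rw [h7, Int.mul_ediv_cancel_left _ (pow_ne_zero _ hp0)]
      rw [hΔg]
      exact Dvd.dvd.mul_right (pow_dvd_pow _ (by omega)) _
  calc R.card ≤ 2 * p ^ e := hN2
  _ ≤ (α + 1) * M := Nat.mul_le_mul (by omega) hpeM
end

section
/- There is an absolute constant C > 0 such that the following holds. Let f, A, B, C, Δ_f, Q, M, δ, t_A, p_r, t_{rA}, 𝒬, 𝒜, P, 𝒵 be as in the stated context with 0 < δ ≤ 1, let r be a positive integer with gcd(r, 2A) = 1, let b be an integer with 1 ≤ b ≤ r and gcd(b, r) = 1, let z ≥ δ·t_{rA}/p_r be a real number, set β = b/r + z and η = δ·t_{rA}·A·M²/(p_r·z), and for real y ≥ 1 define Π_δ(β, η, y) = ∑_{q ∈ 𝒬, y − η ≤ f(q) ≤ y + η} #{ m ∈ ℤ : m ≠ 0, m ≡ −b·f(q) (mod r), (y − 4·p_r·η)·r·z ≤ m ≤ (y + 4·p_r·η)·r·z }. Then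 P_{δ·t_{rA}}(β) ≤ C · ( 1 + η^{−1} · ∫_{AM²}^{2AM²} Π_δ(β, η, y) dy ). -/
open Finset MeasureTheory intervalIntegral
open scoped BigOperators Real Classical

/-- `‖x‖`: the distance from the real number `x` to the nearest integer. -/
noncomputable def nint (x : ℝ) : ℝ := |x - (round x : ℝ)|

/-- The set `𝒬` of positive integers `q ≤ Q` with `AM² < f(q) ≤ 2AM²`. -/
def QSet (f : ℕ → ℕ) (A Q M : ℕ) : Set ℕ :=
  {q | 1 ≤ q ∧ q ≤ Q ∧ (A : ℤ) * M ^ 2 < (f q : ℤ) ∧ (f q : ℤ) ≤ 2 * A * M ^ 2}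

/-- The set `𝒜` of Farey fractions `a/f(q)` with `q ∈ 𝒬`, `1 ≤ a ≤ f(q)`, `gcd(a, f(q)) = 1`. -/
def FareySet (f : ℕ → ℕ) (A Q M : ℕ) : Set ℝ :=
  {x | ∃ q a : ℕ, q ∈ QSet f A Q M ∧ 1 ≤ a ∧ a ≤ f q ∧ Nat.gcd a (f q) = 1 ∧
        x = (a : ℝ) / (f q : ℝ)}

/-- `P_δ(α) = #{α' ∈ 𝒜 : |α − α'| ≤ δ}`. -/
noncomputable def Pcnt (𝒜 : Set ℝ) (δ α : ℝ) : ℕ := {x ∈ 𝒜 | |α - x| ≤ δ}.ncard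

/-- `Π_δ(β, η, y)`. -/
noncomputable def Pifun (f : ℕ → ℕ) (A Q M r b pr : ℕ) (z η : ℝ) (y : ℝ) : ℕ :=
  ∑ q ∈ (Finset.Icc 1 Q).filter
      (fun q => (A : ℤ) * M ^ 2 < (f q : ℤ) ∧ (f q : ℤ) ≤ 2 * A * M ^ 2 ∧
        y - η ≤ (f q : ℝ) ∧ (f q : ℝ) ≤ y + η),
    {m : ℤ | m ≠ 0 ∧ (r : ℤ) ∣ (m + (b : ℤ) * (f q : ℤ)) ∧
      (y - 4 * (pr : ℝ) * η) * r * z ≤ (m : ℝ) ∧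
      (m : ℝ) ≤ (y + 4 * (pr : ℝ) * η) * r * z}.ncard

set_option maxHeartbeats 2000000 in
theorem stmt16 :
    ∃ Cc : ℝ, 0 < Cc ∧
    ∀ (A : ℕ) (B C : ℤ) (f : ℕ → ℕ),
      1 ≤ A →
      (∀ q : ℕ, 1 ≤ q → (f q : ℤ) = (A : ℤ) * q ^ 2 + B * q + C) →
      (∀ q q' : ℕ, 1 ≤ q → q < q' → f q < f q') →
      (∀ q : ℕ, 1 ≤ q → 1 ≤ f q) →
      ∀ Q : ℕ,
        ((|B ^ 2 - 4 * (A : ℤ) * C| : ℤ) : ℝ) / (A : ℝ) ^ 2 ≤ (Q : ℝ) →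
        (f Q : ℝ) ≤ 3 * (A : ℝ) * (Q : ℝ) ^ 2 →
      ∀ M : ℕ, 1 ≤ M →
      ∀ δ : ℝ, 0 < δ → δ ≤ 1 →
      ∀ tA : ℝ, 0 < tA →
        (∀ α : ℝ, Irrational α → ∀ R : ℝ, 1 ≤ R →
          ∃ r : ℕ, 1 ≤ r ∧ (r : ℝ) ≤ R ∧ Nat.gcd r (2 * A) = 1 ∧
            R * nint ((r : ℝ) * α) ≤ tA) →
      ∀ r : ℕ, 1 ≤ r → Nat.gcd r (2 * A) = 1 →
      ∀ pr tr : ℕ, pr.Prime → ¬ (pr ∣ r) → tr.Prime → ¬ (tr ∣ r) → tA ≤ (tr : ℝ) →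
      ∀ b : ℕ, 1 ≤ b → b ≤ r → Nat.gcd b r = 1 →
      ∀ z : ℝ, δ * (tr : ℝ) / (pr : ℝ) ≤ z →
      ∀ β : ℝ, β = (b : ℝ) / (r : ℝ) + z →
      ∀ η : ℝ, η = δ * (tr : ℝ) * A * M ^ 2 / ((pr : ℝ) * z) →
        (Pcnt (FareySet f A Q M) (δ * (tr : ℝ)) β : ℝ) ≤
          Cc * (1 + η⁻¹ *
            ∫ y in ((A : ℝ) * M ^ 2)..(2 * (A : ℝ) * M ^ 2),
              (Pifun f A Q M r b pr z η y : ℝ)) := by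
  classical
  refine ⟨1, one_pos, ?_⟩
  intro A B C f hA hfq hmono hfpos Q hQ1 hQ2 M hM δ hδ0 hδ1 tA htA0 hdio
    r hr1 hrA pr tr hprP hprr htrP htrr htAtr b hb1 hbr hbgcd z hzge β hβ η hη
  -- basic positivity facts
  have hr0 : (0:ℝ) < r := by exact_mod_cast hr1
  have hpr0 : (0:ℝ) < pr := by exact_mod_cast hprP.pos
  have hpr2 : (2:ℝ) ≤ pr := by exact_mod_cast hprP.two_le
  have htr0 : (0:ℝ) < tr := by exact_mod_cast htrP.pos
  have hA0 : (0:ℝ) < A := by exact_mod_cast hA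
  have hM0 : (0:ℝ) < M := by exact_mod_cast hM
  have hz0 : 0 < z := lt_of_lt_of_le (by positivity) hzge
  have hη0 : 0 < η := by rw [hη]; positivity
  have hrz : (0:ℝ) ≤ (r:ℝ) * z := by positivity
  have hδtr : δ * tr ≤ (pr:ℝ) * z := by
    have h := (div_le_iff₀ hpr0).mp hzge
    linarith
  have hkey : (pr:ℝ) * z * η = δ * tr * ((A:ℝ) * M^2) := by
    rw [hη]; field_simp
  have hηAM : η ≤ (A:ℝ) * M^2 := by
    nlinarith [mul_pos hpr0 hz0, mul_pos hA0 (pow_pos hM0 2)]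
  have hle12 : (A:ℝ) * M^2 ≤ 2 * (A:ℝ) * M^2 := by nlinarith [mul_pos hA0 (pow_pos hM0 2)]
  -- injectivity of f on positives
  have hfq_inj : ∀ q q' : ℕ, 1 ≤ q → 1 ≤ q' → f q = f q' → q = q' := by
    intro q q' hq hq' h
    rcases lt_trichotomy q q' with hlt | heq | hgt
    · exact absurd h (Nat.ne_of_lt (hmono q q' hq hlt))
    · exact heq
    · exact absurd h.symm (Nat.ne_of_lt (hmono q' q hq' hgt))
  -- the finite set of counted Farey fractions
  set φ : ℕ × ℕ → ℝ := fun p => (p.2:ℝ) / (f p.1 : ℝ) with hφ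
  set S : Finset (ℕ × ℕ) := (Finset.Icc 1 Q ×ˢ Finset.Icc 1 (2*A*M^2)).filter
    (fun p => (A:ℤ)*M^2 < (f p.1:ℤ) ∧ (f p.1:ℤ) ≤ 2*A*M^2 ∧ 1 ≤ p.2 ∧ p.2 ≤ f p.1 ∧
      Nat.gcd p.2 (f p.1) = 1 ∧ |β - (p.2:ℝ)/(f p.1:ℝ)| ≤ δ * tr) with hS
  have hSspec : ∀ p : ℕ×ℕ, p ∈ S → (1 ≤ p.1 ∧ p.1 ≤ Q) ∧ (A:ℤ)*M^2 < (f p.1:ℤ) ∧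
      (f p.1:ℤ) ≤ 2*A*M^2 ∧ 1 ≤ p.2 ∧ p.2 ≤ f p.1 ∧
      Nat.gcd p.2 (f p.1) = 1 ∧ |β - (p.2:ℝ)/(f p.1:ℝ)| ≤ δ * tr := by
    intro p hp
    rw [hS, Finset.mem_filter, Finset.mem_product, Finset.mem_Icc, Finset.mem_Icc] at hp
    tauto
  have hfR : ∀ p : ℕ×ℕ, p ∈ S → (A:ℝ)*M^2 < (f p.1:ℝ) ∧ (f p.1:ℝ) ≤ 2*(A:ℝ)*M^2 := by
    intro p hp
    obtain ⟨-, h1, h2, -⟩ := hSspec p hp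
    constructor
    · exact_mod_cast h1
    · have : ((f p.1:ℤ):ℝ) ≤ ((2*A*M^2 : ℤ):ℝ) := by exact_mod_cast h2
      push_cast at this ⊢
      linarith
  have hfpos' : ∀ p : ℕ×ℕ, p ∈ S → (0:ℝ) < (f p.1:ℝ) := by
    intro p hp
    have := (hfR p hp).1
    nlinarith [mul_pos hA0 (pow_pos hM0 2)]
  
  -- identify the counted set with S
  have hset : {x ∈ FareySet f A Q M | |β - x| ≤ δ * (tr:ℝ)} = ↑(S.image φ) := by
    ext x
    simp only [Set.mem_setOf_eq, Finset.coe_image, Set.mem_image, Finset.mem_coe,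
      FareySet, QSet]
    constructor
    · rintro ⟨⟨q, a, ⟨hq1, hqQ, hflb, hfub⟩, ha1, ha2, hg, rfl⟩, habs⟩
      refine ⟨(q, a), ?_, rfl⟩
      have hfub' : f q ≤ 2*A*M^2 := by exact_mod_cast hfub
      rw [hS, Finset.mem_filter, Finset.mem_product, Finset.mem_Icc, Finset.mem_Icc]
      exact ⟨⟨⟨hq1, hqQ⟩, ⟨ha1, ha2.trans hfub'⟩⟩, hflb, hfub, ha1, ha2, hg, habs⟩
    · rintro ⟨p, hp, rfl⟩
      obtain ⟨⟨hq1, hqQ⟩, hflb, hfub, ha1, ha2, hg, habs⟩ := hSspec p hp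
      exact ⟨⟨p.1, p.2, ⟨hq1, hqQ, hflb, hfub⟩, ha1, ha2, hg, rfl⟩, habs⟩
  have hinj : Set.InjOn φ ↑S := by
    intro p hp p' hp' he
    obtain ⟨⟨hq1, -⟩, -, -, -, ha2, hg, -⟩ := hSspec p hp
    obtain ⟨⟨hq1', -⟩, -, -, -, ha2', hg', -⟩ := hSspec p' hp'
    have h1 := hfpos' p hp
    have h2 := hfpos' p' hp'
    have hR : (p.2:ℝ) * (f p'.1:ℝ) = (p'.2:ℝ) * (f p.1:ℝ) := by
      have := (div_eq_div_iff h1.ne' h2.ne').mp he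
      linarith
    have hnat : p.2 * f p'.1 = p'.2 * f p.1 := by exact_mod_cast hR
    have hd1 : f p.1 ∣ f p'.1 := by
      refine (Nat.Coprime.symm hg).dvd_of_dvd_mul_left (m := p.2) ?_
      rw [hnat]; exact dvd_mul_left _ _
    have hd2 : f p'.1 ∣ f p.1 := by
      refine (Nat.Coprime.symm hg').dvd_of_dvd_mul_left (m := p'.2) ?_
      rw [← hnat]; exact dvd_mul_left _ _
    have hfe : f p.1 = f p'.1 := Nat.dvd_antisymm hd1 hd2
    have hq : p.1 = p'.1 := hfq_inj _ _ hq1 hq1' hfe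
    have ha : p.2 = p'.2 := by
      have h' : p.2 * f p'.1 = p'.2 * f p'.1 := by rw [hnat, hfe]
      exact Nat.eq_of_mul_eq_mul_right (by exact_mod_cast h2) h'
    exact Prod.ext hq ha
  have hPcard : Pcnt (FareySet f A Q M) (δ * (tr:ℝ)) β = (S.image φ).card := by
    rw [Pcnt, hset, Set.ncard_coe_finset]
  have hPcard2 : Pcnt (FareySet f A Q M) (δ * (tr:ℝ)) β = S.card := by
    rw [hPcard, Finset.card_image_of_injOn hinj]
  
  -- split off the (at most one) fraction equal to b/r
  set S1 : Finset (ℕ×ℕ) := S.filter (fun p => ¬ (p.2 * r = b * f p.1)) with hS1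
  have hS0card : (S.filter (fun p => p.2 * r = b * f p.1)).card ≤ 1 := by
    rw [Finset.card_le_one]
    have key : ∀ u ∈ S.filter (fun p => p.2 * r = b * f p.1), f u.1 = r ∧ u.2 = b := by
      intro u hu
      obtain ⟨huS, he⟩ := Finset.mem_filter.mp hu
      obtain ⟨⟨hq1, -⟩, -, -, -, -, hg, -⟩ := hSspec u huS
      have h1 : f u.1 ∣ r := by
        refine (Nat.Coprime.symm hg).dvd_of_dvd_mul_left (m := u.2) ?_
        rw [he]; exact dvd_mul_left _ _
      have h2 : r ∣ f u.1 := by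
        refine (Nat.Coprime.symm (hbgcd : Nat.Coprime b r)).dvd_of_dvd_mul_left (m := b) ?_
        rw [← he]; exact dvd_mul_left _ _
      have hfr : f u.1 = r := Nat.dvd_antisymm h1 h2
      refine ⟨hfr, ?_⟩
      have : u.2 * r = b * r := by rw [he, hfr]
      exact Nat.eq_of_mul_eq_mul_right hr1 this
    intro u hu v hv
    obtain ⟨hf1, hb1'⟩ := key u hu
    obtain ⟨hf2, hb2'⟩ := key v hv
    obtain ⟨huS, -⟩ := Finset.mem_filter.mp hu
    obtain ⟨hvS, -⟩ := Finset.mem_filter.mp hv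
    obtain ⟨⟨hq1, -⟩, -⟩ := hSspec u huS
    obtain ⟨⟨hq1', -⟩, -⟩ := hSspec v hvS
    exact Prod.ext (hfq_inj _ _ hq1 hq1' (by rw [hf1, hf2])) (by rw [hb1', hb2'])
  have hsplit : S.card ≤ 1 + S1.card := by
    have hsub : S ⊆ (S.filter (fun p => p.2 * r = b * f p.1)) ∪ S1 := by
      intro x hx
      by_cases hc : x.2 * r = b * f x.1
      · exact Finset.mem_union_left _ (Finset.mem_filter.mpr ⟨hx, hc⟩)
      · exact Finset.mem_union_right _ (Finset.mem_filter.mpr ⟨hx, hc⟩)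
    calc S.card ≤ ((S.filter (fun p => p.2 * r = b * f p.1)) ∪ S1).card :=
          Finset.card_le_card hsub
      _ ≤ (S.filter (fun p => p.2 * r = b * f p.1)).card + S1.card :=
          Finset.card_union_le _ _
      _ ≤ 1 + S1.card := by omega
  have hS1spec : ∀ p ∈ S1, p ∈ S ∧ ((p.2:ℤ) * r - b * (f p.1:ℤ) ≠ 0) := by
    intro p hp
    obtain ⟨hpS, hne⟩ := Finset.mem_filter.mp hp
    refine ⟨hpS, fun h => hne ?_⟩
    have h' : (p.2:ℤ) * r = (b:ℤ) * (f p.1:ℤ) := by linarith [sub_eq_zero.mp h]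
    exact_mod_cast h'
  -- the key arithmetic estimate
  have hmain : ∀ p ∈ S, ∀ y : ℝ, |y - (f p.1:ℝ)| ≤ η →
      (y - 4*(pr:ℝ)*η) * r * z ≤ (((p.2:ℤ) * r - b * (f p.1:ℤ) : ℤ) : ℝ) ∧
      (((p.2:ℤ) * r - b * (f p.1:ℤ) : ℤ) : ℝ) ≤ (y + 4*(pr:ℝ)*η) * r * z := by
    intro p hp y hy
    obtain ⟨-, -, -, -, -, -, habs⟩ := hSspec p hp
    obtain ⟨hFlb, hFub⟩ := hfR p hp
    have hF0 : (0:ℝ) < (f p.1:ℝ) := hfpos' p hp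
    have e : β - (p.2:ℝ)/(f p.1:ℝ) =
        ((r:ℝ)*(f p.1:ℝ)*z - ((p.2:ℝ)*(r:ℝ) - (b:ℝ)*(f p.1:ℝ))) / ((r:ℝ)*(f p.1:ℝ)) := by
      rw [hβ]; field_simp; ring
    have hden : (0:ℝ) < (r:ℝ)*(f p.1:ℝ) := by positivity
    rw [e, abs_div, abs_of_pos hden, div_le_iff₀ hden] at habs
    have hb2 : δ * tr * ((r:ℝ)*(f p.1:ℝ)) ≤ 2*(r:ℝ)*((pr:ℝ)*z*η) := by
      have h2 : δ * tr * ((r:ℝ)*(f p.1:ℝ)) ≤ δ * tr * ((r:ℝ)*(2*(A:ℝ)*M^2)) := by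
        have h0 : (0:ℝ) ≤ δ * tr * r := by positivity
        nlinarith
      calc δ * tr * ((r:ℝ)*(f p.1:ℝ)) ≤ δ * tr * ((r:ℝ)*(2*(A:ℝ)*M^2)) := h2
        _ = 2*(r:ℝ)*((pr:ℝ)*z*η) := by rw [hkey]; ring
    obtain ⟨hl, hu⟩ := abs_le.mp habs
    obtain ⟨hyl, hyr⟩ := abs_le.mp hy
    have hη4 : (0:ℝ) ≤ (r:ℝ)*z*η*(2*(pr:ℝ) - 1) := by
      have : (0:ℝ) ≤ 2*(pr:ℝ) - 1 := by linarith
      positivity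
    constructor
    · push_cast
      have l1 : (r:ℝ)*z*(y-η) ≤ (r:ℝ)*z*(f p.1:ℝ) :=
        mul_le_mul_of_nonneg_left (by linarith) hrz
      nlinarith
    · push_cast
      have l1 : (r:ℝ)*z*(f p.1:ℝ) ≤ (r:ℝ)*z*(y+η) :=
        mul_le_mul_of_nonneg_left (by linarith) hrz
      nlinarith
  
  -- the comparison function G, equal to Pifun on the integration range
  set K : ℤ := ⌈(2*(A:ℝ)*M^2 + 4*(pr:ℝ)*η) * ((r:ℝ) * z)⌉ with hK
  have hKU : ∀ y : ℝ, (A:ℝ)*M^2 ≤ y → y ≤ 2*(A:ℝ)*M^2 → ∀ m : ℤ,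
      (y - 4*(pr:ℝ)*η) * r * z ≤ (m:ℝ) → (m:ℝ) ≤ (y + 4*(pr:ℝ)*η) * r * z →
      (-K ≤ m ∧ m ≤ K) := by
    intro y hy1 hy2 m hm1 hm2
    have hC : (0:ℝ) ≤ (2*(A:ℝ)*M^2 + 4*(pr:ℝ)*η) * ((r:ℝ) * z) := by positivity
    have hKR : (2*(A:ℝ)*M^2 + 4*(pr:ℝ)*η) * ((r:ℝ) * z) ≤ (K:ℝ) := Int.le_ceil _
    constructor
    · have h1 : -((K:ℝ)) ≤ (m:ℝ) := by nlinarith [mul_pos hA0 (pow_pos hM0 2)]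
      exact_mod_cast h1
    · have h2 : (m:ℝ) ≤ (K:ℝ) := by nlinarith
      exact_mod_cast h2
  set Cond : ℕ → ℤ → ℝ → Prop := fun q m y =>
    (y - η ≤ (f q:ℝ)) ∧ ((f q:ℝ) ≤ y + η) ∧
    ((y - 4*(pr:ℝ)*η) * r * z ≤ (m:ℝ)) ∧ ((m:ℝ) ≤ (y + 4*(pr:ℝ)*η) * r * z) ∧
    ((A:ℤ)*M^2 < (f q:ℤ)) ∧ ((f q:ℤ) ≤ 2*A*M^2) ∧ m ≠ 0 ∧ ((r:ℤ) ∣ (m + b*(f q:ℤ)))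
    with hCond
  have hCondMeas : ∀ (q : ℕ) (m : ℤ), MeasurableSet {y : ℝ | Cond q m y} := by
    intro q m
    have hrw : {y : ℝ | Cond q m y} =
        (Set.Iic ((f q:ℝ) + η) ∩ Set.Ici ((f q:ℝ) - η)) ∩
        (((fun y : ℝ => (y - 4*(pr:ℝ)*η) * r * z) ⁻¹' Set.Iic (m:ℝ)) ∩
         ((fun y : ℝ => (y + 4*(pr:ℝ)*η) * r * z) ⁻¹' Set.Ici (m:ℝ))) ∩
        {_y : ℝ | ((A:ℤ)*M^2 < (f q:ℤ)) ∧ ((f q:ℤ) ≤ 2*A*M^2) ∧ m ≠ 0 ∧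
          ((r:ℤ) ∣ (m + b*(f q:ℤ)))} := by
      ext y
      simp only [hCond, Set.mem_setOf_eq, Set.mem_inter_iff, Set.mem_Iic, Set.mem_Ici,
        Set.mem_preimage]
      constructor
      · rintro ⟨h1, h2, h3, h4, h5⟩
        exact ⟨⟨⟨by linarith, by linarith⟩, h3, h4⟩, h5⟩
      · rintro ⟨⟨⟨h1, h2⟩, h3, h4⟩, h5⟩
        exact ⟨by linarith, by linarith, h3, h4, h5⟩
    rw [hrw]
    refine MeasurableSet.inter (MeasurableSet.inter ?_ ?_) ?_
    · exact measurableSet_Iic.inter measurableSet_Ici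
    · refine MeasurableSet.inter ?_ ?_
      · exact (((measurable_id.sub_const _).mul_const _).mul_const _) measurableSet_Iic
      · exact (((measurable_id.add_const _).mul_const _).mul_const _) measurableSet_Ici
    · exact MeasurableSet.const _
  have hIndInt : ∀ (q : ℕ) (m : ℤ),
      Integrable (Set.indicator {y' : ℝ | Cond q m y'} (fun _ => (1:ℝ))) volume := by
    intro q m
    rw [integrable_indicator_iff (hCondMeas q m)]
    refine (integrableOn_const_iff (C := (1:ℝ))).mpr (Or.inr ?_)
    have hsub : {y' : ℝ | Cond q m y'} ⊆ Set.Icc ((f q:ℝ) - η) ((f q:ℝ) + η) := by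
      intro y hy
      obtain ⟨h1, h2, -⟩ := hy
      exact ⟨by linarith, by linarith⟩
    exact lt_of_le_of_lt (measure_mono hsub) measure_Icc_lt_top
  set G : ℝ → ℝ := fun y => ∑ q ∈ Finset.Icc 1 Q, ∑ m ∈ Finset.Icc (-K) K,
    Set.indicator {y' : ℝ | Cond q m y'} (fun _ => (1:ℝ)) y with hG
  have hGInt : Integrable G volume := by
    rw [hG]
    exact integrable_finset_sum _ (fun q _ =>
      integrable_finset_sum _ (fun m _ => hIndInt q m))
  have hPG : ∀ y ∈ Set.Icc ((A:ℝ)*M^2) (2*(A:ℝ)*M^2),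
      (Pifun f A Q M r b pr z η y : ℝ) = G y := by
    intro y hy
    obtain ⟨hy1, hy2⟩ := hy
    rw [Pifun, hG, Nat.cast_sum, Finset.sum_filter]
    refine Finset.sum_congr rfl (fun q hq => ?_)
    by_cases hc : (A:ℤ)*M^2 < (f q:ℤ) ∧ (f q:ℤ) ≤ 2*A*M^2 ∧ y - η ≤ (f q:ℝ) ∧ (f q:ℝ) ≤ y + η
    · rw [if_pos hc]
      have hsetq : {m : ℤ | m ≠ 0 ∧ (r:ℤ) ∣ (m + (b:ℤ)*(f q:ℤ)) ∧
          (y - 4*(pr:ℝ)*η) * r * z ≤ (m:ℝ) ∧ (m:ℝ) ≤ (y + 4*(pr:ℝ)*η) * r * z}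
          = ↑((Finset.Icc (-K) K).filter (fun m => Cond q m y)) := by
        ext m
        simp only [Set.mem_setOf_eq, Finset.coe_filter, Finset.mem_Icc, hCond]
        constructor
        · rintro ⟨h1, h2, h3, h4⟩
          exact ⟨hKU y hy1 hy2 m h3 h4, hc.2.2.1, hc.2.2.2, h3, h4, hc.1, hc.2.1, h1, h2⟩
        · rintro ⟨-, -, -, h3, h4, -, -, h1, h2⟩
          exact ⟨h1, h2, h3, h4⟩
      rw [hsetq, Set.ncard_coe_finset, Finset.card_filter]
      push_cast
      refine Finset.sum_congr rfl (fun m _ => ?_)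
      rw [Set.indicator_apply]
      simp only [Set.mem_setOf_eq]
    · rw [if_neg hc]
      symm
      refine Finset.sum_eq_zero (fun m _ => ?_)
      refine Set.indicator_of_notMem ?_ _
      intro hcondm
      rw [hCond] at hcondm
      obtain ⟨h1, h2, -, -, h5, h6, -⟩ := hcondm
      exact hc ⟨h5, h6, h1, h2⟩
  have hPint : IntervalIntegrable (fun y => (Pifun f A Q M r b pr z η y : ℝ)) volume
      ((A:ℝ)*M^2) (2*(A:ℝ)*M^2) := by
    rw [intervalIntegrable_iff_integrableOn_Ioc_of_le hle12]
    exact (hGInt.integrableOn).congr_fun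
      (fun y hy => (hPG y (Set.Ioc_subset_Icc_self hy)).symm) measurableSet_Ioc
  have hint_eq : (∫ y in ((A:ℝ)*M^2)..(2*(A:ℝ)*M^2), (Pifun f A Q M r b pr z η y : ℝ))
      = ∫ y in ((A:ℝ)*M^2)..(2*(A:ℝ)*M^2), G y := by
    refine intervalIntegral.integral_congr ?_
    rw [Set.uIcc_of_le hle12]
    exact hPG
  
  -- pointwise counting bound
  have hcount : ∀ y : ℝ, (A:ℝ)*M^2 ≤ y → y ≤ 2*(A:ℝ)*M^2 →
      (S1.filter (fun p => |y - (f p.1:ℝ)| ≤ η)).card ≤ Pifun f A Q M r b pr z η y := by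
    intro y hy1 hy2
    rw [Pifun]
    rw [Finset.card_eq_sum_card_fiberwise (f := Prod.fst)
      (t := (Finset.Icc 1 Q).filter
        (fun q => (A:ℤ)*M^2 < (f q:ℤ) ∧ (f q:ℤ) ≤ 2*A*M^2 ∧
          y - η ≤ (f q:ℝ) ∧ (f q:ℝ) ≤ y + η)) ?_]
    · refine Finset.sum_le_sum (fun q hqT => ?_)
      set Fib := (S1.filter (fun p => |y - (f p.1:ℝ)| ≤ η)).filter
        (fun p => p.1 = q) with hFib
      set g0 : ℕ × ℕ → ℤ := fun p => (p.2:ℤ)*r - b*(f p.1:ℤ) with hg0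
      have hFibS : ∀ p ∈ Fib, p ∈ S ∧ p.1 = q ∧ |y - (f p.1:ℝ)| ≤ η ∧ g0 p ≠ 0 := by
        intro p hp
        obtain ⟨hp1, hp2⟩ := Finset.mem_filter.mp hp
        obtain ⟨hp3, hp4⟩ := Finset.mem_filter.mp hp1
        obtain ⟨hpS, hne⟩ := hS1spec p hp3
        exact ⟨hpS, hp2, hp4, hne⟩
      have hinjF : Set.InjOn g0 ↑Fib := by
        intro p hp p' hp' he
        obtain ⟨-, he1, -, -⟩ := hFibS p (by exact_mod_cast hp)
        obtain ⟨-, he1', -, -⟩ := hFibS p' (by exact_mod_cast hp')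
        have hq12 : p.1 = p'.1 := by rw [he1, he1']
        simp only [hg0] at he
        simp only [hq12] at he
        have h2 : (p.2:ℤ)*r = (p'.2:ℤ)*r := by linarith [he]
        have h3 : (p.2:ℤ) = (p'.2:ℤ) := by
          have hrne : (r:ℤ) ≠ 0 := by exact_mod_cast (by omega : r ≠ 0)
          exact mul_right_cancel₀ hrne h2
        exact Prod.ext hq12 (by exact_mod_cast h3)
      have himg : ↑(Fib.image g0) ⊆ {m : ℤ | m ≠ 0 ∧ (r:ℤ) ∣ (m + (b:ℤ)*(f q:ℤ)) ∧
          (y - 4*(pr:ℝ)*η) * r * z ≤ (m:ℝ) ∧ (m:ℝ) ≤ (y + 4*(pr:ℝ)*η) * r * z} := by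
        intro m hm
        simp only [Finset.coe_image, Set.mem_image, Finset.mem_coe] at hm
        obtain ⟨p, hp, rfl⟩ := hm
        obtain ⟨hpS, hpq, hpy, hne⟩ := hFibS p hp
        obtain ⟨hlow, hhigh⟩ := hmain p hpS y hpy
        refine ⟨hne, ?_, ?_, ?_⟩
        · simp only [hg0, hpq]
          exact ⟨(p.2:ℤ), by ring⟩
        · simp only [hg0, hpq]; simp only [hpq] at hlow; exact hlow
        · simp only [hg0, hpq]; simp only [hpq] at hhigh; exact hhigh
      have hfin : ({m : ℤ | m ≠ 0 ∧ (r:ℤ) ∣ (m + (b:ℤ)*(f q:ℤ)) ∧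
          (y - 4*(pr:ℝ)*η) * r * z ≤ (m:ℝ) ∧ (m:ℝ) ≤ (y + 4*(pr:ℝ)*η) * r * z}).Finite := by
        refine Set.Finite.subset (Set.finite_Icc
          ⌈(y - 4*(pr:ℝ)*η) * r * z⌉ ⌊(y + 4*(pr:ℝ)*η) * r * z⌋) ?_
        rintro m ⟨-, -, h3, h4⟩
        exact ⟨Int.ceil_le.mpr h3, Int.le_floor.mpr h4⟩
      calc Fib.card = (Fib.image g0).card := (Finset.card_image_of_injOn hinjF).symm
        _ = (↑(Fib.image g0) : Set ℤ).ncard := (Set.ncard_coe_finset _).symm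
        _ ≤ _ := Set.ncard_le_ncard himg hfin
    · intro p hp
      obtain ⟨hpS1, hpy⟩ := Finset.mem_filter.mp hp
      obtain ⟨hpS, -⟩ := hS1spec p hpS1
      obtain ⟨⟨hq1, hqQ⟩, hflb, hfub, -⟩ := hSspec p hpS
      obtain ⟨hyl, hyr⟩ := abs_le.mp hpy
      exact Finset.mem_filter.mpr ⟨Finset.mem_Icc.mpr ⟨hq1, hqQ⟩,
        hflb, hfub, by linarith, by linarith⟩
  -- the lower indicator sum
  set gphp : ℝ → ℝ := fun y => ∑ p ∈ S1,
    Set.indicator (Set.Icc ((f p.1:ℝ) - η) ((f p.1:ℝ) + η)) (fun _ => (1:ℝ)) y with hgphp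
  have hIndInt2 : ∀ p : ℕ × ℕ,
      Integrable (Set.indicator (Set.Icc ((f p.1:ℝ) - η) ((f p.1:ℝ) + η))
        (fun _ => (1:ℝ))) volume := by
    intro p
    rw [integrable_indicator_iff measurableSet_Icc]
    exact (integrableOn_const_iff (C := (1:ℝ))).mpr (Or.inr measure_Icc_lt_top)
  have hgInt : Integrable gphp volume := by
    rw [hgphp]
    exact integrable_finset_sum _ (fun p _ => hIndInt2 p)
  have h_g_le_P : ∀ y ∈ Set.Icc ((A:ℝ)*M^2) (2*(A:ℝ)*M^2),
      gphp y ≤ (Pifun f A Q M r b pr z η y : ℝ) := by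
    intro y hy
    have he : gphp y = ((S1.filter (fun p => |y - (f p.1:ℝ)| ≤ η)).card : ℝ) := by
      rw [hgphp, Finset.card_filter]
      push_cast
      refine Finset.sum_congr rfl (fun p _ => ?_)
      rw [Set.indicator_apply]
      refine if_congr ?_ rfl rfl
      rw [Set.mem_Icc, abs_le]
      constructor
      · rintro ⟨h1, h2⟩; exact ⟨by linarith, by linarith⟩
      · rintro ⟨h1, h2⟩; exact ⟨by linarith, by linarith⟩
    rw [he]
    exact_mod_cast hcount y hy.1 hy.2
  -- each indicator has interval integral at least η
  have hIntLB : ∀ p ∈ S1, η ≤ ∫ y in ((A:ℝ)*M^2)..(2*(A:ℝ)*M^2),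
      Set.indicator (Set.Icc ((f p.1:ℝ) - η) ((f p.1:ℝ) + η)) (fun _ => (1:ℝ)) y := by
    intro p hp
    obtain ⟨hpS, -⟩ := hS1spec p hp
    obtain ⟨hFlb, hFub⟩ := hfR p hpS
    set c' : ℝ := max ((f p.1:ℝ) - η) ((A:ℝ)*M^2) with hc'
    set d' : ℝ := min ((f p.1:ℝ) + η) (2*(A:ℝ)*M^2) with hd'
    have h1 : (A:ℝ)*M^2 ≤ c' := le_max_right _ _
    have h2 : d' ≤ 2*(A:ℝ)*M^2 := min_le_right _ _
    have hc1 : c' ≤ (f p.1:ℝ) := max_le (by linarith) hFlb.le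
    have hc2 : c' ≤ 2*(A:ℝ)*M^2 - η := max_le (by linarith) (by linarith)
    have h3 : c' + η ≤ d' := le_min (by linarith) (by linarith)
    have hIoc : (∫ y in ((A:ℝ)*M^2)..(2*(A:ℝ)*M^2),
        Set.indicator (Set.Ioc c' d') (fun _ => (1:ℝ)) y) = d' - c' := by
      rw [intervalIntegral.integral_of_le hle12,
        MeasureTheory.setIntegral_indicator measurableSet_Ioc,
        Set.inter_eq_self_of_subset_right (Set.Ioc_subset_Ioc h1 h2),
        MeasureTheory.setIntegral_const, Real.volume_real_Ioc_of_le (by linarith),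
        smul_eq_mul, mul_one]
    have hmono2 : ∀ y ∈ Set.Icc ((A:ℝ)*M^2) (2*(A:ℝ)*M^2),
        Set.indicator (Set.Ioc c' d') (fun _ => (1:ℝ)) y ≤
        Set.indicator (Set.Icc ((f p.1:ℝ) - η) ((f p.1:ℝ) + η)) (fun _ => (1:ℝ)) y := by
      intro y _
      refine Set.indicator_le_indicator_of_subset ?_ (fun _ => zero_le_one) y
      intro x hx
      obtain ⟨hx1, hx2⟩ := hx
      have := le_max_left ((f p.1:ℝ) - η) ((A:ℝ)*M^2)
      have := min_le_left ((f p.1:ℝ) + η) (2*(A:ℝ)*M^2)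
      exact ⟨by linarith, by linarith⟩
    have hII1 : IntervalIntegrable (Set.indicator (Set.Ioc c' d') (fun _ => (1:ℝ)))
        volume ((A:ℝ)*M^2) (2*(A:ℝ)*M^2) := by
      refine MeasureTheory.Integrable.intervalIntegrable ?_
      rw [integrable_indicator_iff measurableSet_Ioc]
      exact (integrableOn_const_iff (C := (1:ℝ))).mpr (Or.inr measure_Ioc_lt_top)
    calc η ≤ d' - c' := by linarith
      _ = _ := hIoc.symm
      _ ≤ _ := intervalIntegral.integral_mono_on hle12 hII1
          (hIndInt2 p).intervalIntegrable hmono2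
  -- put everything together
  have hsum : η * S1.card ≤ ∫ y in ((A:ℝ)*M^2)..(2*(A:ℝ)*M^2), gphp y := by
    have he : (∫ y in ((A:ℝ)*M^2)..(2*(A:ℝ)*M^2), gphp y) = ∑ p ∈ S1,
        ∫ y in ((A:ℝ)*M^2)..(2*(A:ℝ)*M^2),
          Set.indicator (Set.Icc ((f p.1:ℝ) - η) ((f p.1:ℝ) + η)) (fun _ => (1:ℝ)) y := by
      rw [hgphp]
      exact intervalIntegral.integral_finset_sum
        (fun p _ => (hIndInt2 p).intervalIntegrable)
    rw [he]
    calc η * S1.card = ∑ _p ∈ S1, η := by rw [Finset.sum_const, nsmul_eq_mul]; ring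
      _ ≤ _ := Finset.sum_le_sum (fun p hp => hIntLB p hp)
  have hgP : (∫ y in ((A:ℝ)*M^2)..(2*(A:ℝ)*M^2), gphp y) ≤
      ∫ y in ((A:ℝ)*M^2)..(2*(A:ℝ)*M^2), (Pifun f A Q M r b pr z η y : ℝ) :=
    intervalIntegral.integral_mono_on hle12 hgInt.intervalIntegrable hPint h_g_le_P
  have hfinal : (S1.card : ℝ) ≤ η⁻¹ *
      ∫ y in ((A:ℝ)*M^2)..(2*(A:ℝ)*M^2), (Pifun f A Q M r b pr z η y : ℝ) := by
    rw [inv_mul_eq_div, le_div_iff₀ hη0]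
    calc (S1.card : ℝ) * η = η * S1.card := by ring
      _ ≤ _ := le_trans hsum hgP
  rw [hPcard2, one_mul]
  have hcast : (S.card : ℝ) ≤ 1 + (S1.card : ℝ) := by exact_mod_cast hsplit
  linarith
end
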